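/- Let N be a positive integer, d a positive divisor of N, and Δ = gcd(d, N/d). Set h_d = [[1,d,0],[0,1,0],[0,0,1]] and w_d = (d,1,0)ᵀ, and let S′ be the subgroup of Γ₀(N,3)′ consisting of all γ with γ·w_d = w_d or γ·w_d = −w_d. Then: (i) for every γ ∈ S′ the matrix m = h_d⁻¹ γ h_d has vanishing (1,2) and (3,2) entries; (ii) the map π′_d : S′ → GL₂(ℤ) sending γ to the matrix [[m₁₁, m₁₃],[m₃₁, m₃₃]], where m = h_d⁻¹ γ h_d, is a group homomorphism; (iii) the image of π′_d is exactly the set of matrices [[a,b],[c,D]] ∈ GL₂(ℤ) with det ±1, b ≡ 0 (mod d), and a ≡ det (mod Δ) (i.e. the group of transposes of elements of Γ₁(d,Δ)^*); and (iv) the kernel of π′_d is isomorphic to ℤ × ℤ. -/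

import Mathlib

/-- `SL₃(ℤ)`. -/
abbrev SL3 : Type := Matrix.SpecialLinearGroup (Fin 3) ℤ

/-- The matrix `h_d = [[1,d,0],[0,1,0],[0,0,1]]` as an element of `SL₃(ℤ)`. -/
def hMat (d : ℕ) : SL3 :=
  ⟨!![1, (d : ℤ), 0; 0, 1, 0; 0, 0, 1], by simp [Matrix.det_fin_three]⟩

/-- The subgroup `S′` of `Γ₀(N,3)′ ⊆ SL₃(ℤ)` consisting of the `γ` with
`γ · (d,1,0)ᵀ = ± (d,1,0)ᵀ`; here `Γ₀(N,3)′` is the set of elements of `SL₃(ℤ)` whose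
`(1,2)` and `(1,3)` entries (`1`-indexed) are divisible by `N`. -/
def stabLineGroup' (N d : ℕ) : Subgroup SL3 where
  carrier := {γ |
    ((N : ℤ) ∣ (γ : Matrix (Fin 3) (Fin 3) ℤ) 0 1 ∧
     (N : ℤ) ∣ (γ : Matrix (Fin 3) (Fin 3) ℤ) 0 2) ∧
    ((γ : Matrix (Fin 3) (Fin 3) ℤ).mulVec ![(d : ℤ), 1, 0] = ![(d : ℤ), 1, 0] ∨
     (γ : Matrix (Fin 3) (Fin 3) ℤ).mulVec ![(d : ℤ), 1, 0] = -![(d : ℤ), 1, 0])}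
  one_mem' := by
    refine ⟨⟨?_, ?_⟩, Or.inl ?_⟩
    · rw [Matrix.SpecialLinearGroup.coe_one, Matrix.one_apply_ne (by decide)]
      exact dvd_zero _
    · rw [Matrix.SpecialLinearGroup.coe_one, Matrix.one_apply_ne (by decide)]
      exact dvd_zero _
    · rw [Matrix.SpecialLinearGroup.coe_one, Matrix.one_mulVec]
  mul_mem' := by
    rintro a b ⟨⟨ha1, ha2⟩, hav⟩ ⟨⟨hb1, hb2⟩, hbv⟩
    have hco : ∀ j : Fin 3, ((a * b : SL3) : Matrix (Fin 3) (Fin 3) ℤ) 0 j =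
        (a : Matrix (Fin 3) (Fin 3) ℤ) 0 0 * (b : Matrix (Fin 3) (Fin 3) ℤ) 0 j +
        (a : Matrix (Fin 3) (Fin 3) ℤ) 0 1 * (b : Matrix (Fin 3) (Fin 3) ℤ) 1 j +
        (a : Matrix (Fin 3) (Fin 3) ℤ) 0 2 * (b : Matrix (Fin 3) (Fin 3) ℤ) 2 j := by
      intro j
      rw [Matrix.SpecialLinearGroup.coe_mul, Matrix.mul_apply, Fin.sum_univ_three]
    have hmv : ((a * b : SL3) : Matrix (Fin 3) (Fin 3) ℤ).mulVec ![(d : ℤ), 1, 0] =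
        (a : Matrix (Fin 3) (Fin 3) ℤ).mulVec
          ((b : Matrix (Fin 3) (Fin 3) ℤ).mulVec ![(d : ℤ), 1, 0]) := by
      rw [Matrix.SpecialLinearGroup.coe_mul, Matrix.mulVec_mulVec]
    refine ⟨⟨?_, ?_⟩, ?_⟩
    · rw [hco 1]
      exact dvd_add (dvd_add (hb1.mul_left _) (ha1.mul_right _)) (ha2.mul_right _)
    · rw [hco 2]
      exact dvd_add (dvd_add (hb2.mul_left _) (ha1.mul_right _)) (ha2.mul_right _)
    · rcases hav with ha | ha <;> rcases hbv with hb | hb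
      · left; rw [hmv, hb, ha]
      · right; rw [hmv, hb, Matrix.mulVec_neg, ha]
      · right; rw [hmv, hb, ha]
      · left; rw [hmv, hb, Matrix.mulVec_neg, ha, neg_neg]
  inv_mem' := by
    rintro a ⟨⟨ha1, ha2⟩, hav⟩
    have hAB : (a : Matrix (Fin 3) (Fin 3) ℤ) * ((a⁻¹ : SL3) : Matrix (Fin 3) (Fin 3) ℤ)
        = 1 := by
      rw [← Matrix.SpecialLinearGroup.coe_mul, mul_inv_cancel,
        Matrix.SpecialLinearGroup.coe_one]
    have hBA : ((a⁻¹ : SL3) : Matrix (Fin 3) (Fin 3) ℤ) * (a : Matrix (Fin 3) (Fin 3) ℤ)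
        = 1 := by
      rw [← Matrix.SpecialLinearGroup.coe_mul, inv_mul_cancel,
        Matrix.SpecialLinearGroup.coe_one]
    set A : Matrix (Fin 3) (Fin 3) ℤ := (a : Matrix (Fin 3) (Fin 3) ℤ)
    set B : Matrix (Fin 3) (Fin 3) ℤ := ((a⁻¹ : SL3) : Matrix (Fin 3) (Fin 3) ℤ)
    have key : ∀ j : Fin 3,
        A 0 0 * B 0 j + A 0 1 * B 1 j + A 0 2 * B 2 j =
          (1 : Matrix (Fin 3) (Fin 3) ℤ) 0 j := by
      intro j
      have h := (Matrix.ext_iff.mpr hAB) 0 j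
      rwa [Matrix.mul_apply, Fin.sum_univ_three] at h
    have h0 : (N : ℤ) ∣ A 0 0 * B 0 0 - 1 := by
      have h := key 0
      rw [Matrix.one_apply_eq] at h
      have he : A 0 0 * B 0 0 - 1 = -(A 0 1 * B 1 0) - A 0 2 * B 2 0 := by linarith
      rw [he]
      exact dvd_sub (dvd_neg.mpr (ha1.mul_right _)) (ha2.mul_right _)
    have hgen : ∀ j : Fin 3, j ≠ 0 → (N : ℤ) ∣ B 0 j := by
      intro j hj
      have h := key j
      rw [Matrix.one_apply_ne (Ne.symm hj)] at h
      have hBj : (N : ℤ) ∣ A 0 0 * B 0 j := by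
        have he : A 0 0 * B 0 j = -(A 0 1 * B 1 j) - A 0 2 * B 2 j := by linarith
        rw [he]
        exact dvd_sub (dvd_neg.mpr (ha1.mul_right _)) (ha2.mul_right _)
      have he : B 0 j = B 0 0 * (A 0 0 * B 0 j) - B 0 j * (A 0 0 * B 0 0 - 1) := by ring
      rw [he]
      exact dvd_sub (hBj.mul_left _) (h0.mul_left _)
    refine ⟨⟨hgen 1 (by decide), hgen 2 (by decide)⟩, ?_⟩
    have hBv : B.mulVec (A.mulVec ![(d : ℤ), 1, 0]) = ![(d : ℤ), 1, 0] := by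
      rw [Matrix.mulVec_mulVec, hBA, Matrix.one_mulVec]
    rcases hav with ha | ha
    · left; rwa [ha] at hBv
    · right
      rw [ha, Matrix.mulVec_neg] at hBv
      exact neg_eq_iff_eq_neg.mp hBv

/-!
Conjugation by `h_d` moves `w_d = h_d e₂` to `e₂`, so `γ w_d = ±w_d` says that the middle column
of `m = h_d⁻¹ γ h_d` is `±e₂`. Such matrices are block triangular for the splitting `{1,3} | {2}`,
hence taking the `{1,3}`-corner block is multiplicative, and `1 = det m = m₂₂ · det(block)` forces
`det(block) = m₂₂ = ±1`. Writing `N = d W`, the divisibilities `N ∣ γ₁₂, γ₁₃` become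
`W ∣ m₂₂ - m₁₁ - d m₂₁` and `d W ∣ m₁₃ + d m₂₃`. Given the block, the first is solvable in `m₂₁`
exactly when `gcd(d, W) ∣ m₁₁ - det`, and the second in `m₂₃` exactly when `d ∣ m₁₃`; this is the
image. The kernel consists of the unipotent `m` with `(m₂₁, m₂₃) ∈ (W / gcd(d, W)) ℤ × W ℤ`.
-/

local notation "M₃" => Matrix (Fin 3) (Fin 3) ℤ

theorem Matrix.submatrix_mul_of_apply_eq_zero {l m n o p q R : Type*} [Fintype l] [Fintype n]
    [NonUnitalNonAssocSemiring R] (A : Matrix m n R) (B : Matrix n o R) (r : p → m) (c : q → o)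
    {f : l → n} (hf : Function.Injective f) (hA : ∀ i, ∀ k ∉ Set.range f, A (r i) k = 0) :
    (A * B).submatrix r c = A.submatrix r f * B.submatrix f c := by
  ext i j
  simp only [Matrix.submatrix_apply, Matrix.mul_apply]
  exact (Fintype.sum_of_injective f hf _ _ (fun k hk => by simp [hA i k hk]) fun _ => rfl).symm

theorem Int.exists_dvd_sub_mul_of_gcd_dvd {a b r : ℤ} (h : (Int.gcd a b : ℤ) ∣ r) :
    ∃ x, b ∣ r - a * x := by
  obtain ⟨k, rfl⟩ := h
  refine ⟨Int.gcdA a b * k, Int.gcdB a b * k, ?_⟩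
  rw [Int.gcd_eq_gcd_ab]
  ring

theorem Int.dvd_mul_iff_div_gcd_dvd {a b : ℤ} (x : ℤ) (hb : b ≠ 0) :
    b ∣ a * x ↔ b / Int.gcd a b ∣ x := by
  have hg : 0 < Int.gcd a b := Nat.pos_of_ne_zero (Int.gcd_ne_zero_right hb)
  obtain ⟨a', b', hcop, ha, hb'⟩ := Int.exists_gcd_one hg
  have hg' : (Int.gcd a b : ℤ) ≠ 0 := by exact_mod_cast hg.ne'
  set g : ℤ := (Int.gcd a b : ℤ)
  rw [Int.ediv_eq_of_eq_mul_left hg' hb', hb', ha, mul_right_comm, mul_dvd_mul_iff_right hg']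
  exact ⟨(Int.isCoprime_iff_gcd_eq_one.mpr hcop).symm.dvd_of_dvd_mul_left, (Dvd.dvd.mul_left · _)⟩

theorem coe_hMat_inv (d : ℕ) :
    (((hMat d)⁻¹ : SL3) : M₃) = !![1, -(d : ℤ), 0; 0, 1, 0; 0, 0, 1] := by
  rw [Matrix.SpecialLinearGroup.coe_inv, hMat]
  ext i j
  fin_cases i <;> fin_cases j <;> simp [Matrix.adjugate_fin_three]

theorem coe_hMat_mul_mul_inv (d : ℕ) (m : SL3) :
    ((hMat d * m * (hMat d)⁻¹ : SL3) : M₃) =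
      !![m 0 0 + d * m 1 0, m 0 1 + d * m 1 1 - d * (m 0 0 + d * m 1 0), m 0 2 + d * m 1 2;
         m 1 0, m 1 1 - d * m 1 0, m 1 2;
         m 2 0, m 2 1 - d * m 2 0, m 2 2] := by
  rw [Matrix.SpecialLinearGroup.coe_mul, Matrix.SpecialLinearGroup.coe_mul, coe_hMat_inv,
    Matrix.eta_fin_three (m : M₃)]
  simp only [hMat, Matrix.mul_fin_three]
  ext i j
  fin_cases i <;> fin_cases j <;> simp <;> ring

theorem coe_hMat_mul_mul_inv_mulVec (d : ℕ) (m : SL3) :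
    ((hMat d * m * (hMat d)⁻¹ : SL3) : M₃).mulVec ![(d : ℤ), 1, 0] =
      ![m 0 1 + d * m 1 1, m 1 1, m 2 1] := by
  rw [coe_hMat_mul_mul_inv]
  ext i
  fin_cases i <;> simp [Matrix.mulVec, dotProduct, Fin.sum_univ_three] <;> ring

/-- The conditions on `m` for `γ = h_d m h_d⁻¹` to lie in `S′` when `N = d * W`; the last two
are `N ∣ γ 0 1` and `N ∣ γ 0 2`. -/
structure IsConjStab (d W : ℕ) (m : M₃) : Prop where
  apply_zero_one : m 0 1 = 0
  apply_two_one : m 2 1 = 0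
  apply_one_one : m 1 1 = 1 ∨ m 1 1 = -1
  dvd_zero_one : (d * W : ℤ) ∣ d * (m 1 1 - m 0 0 - d * m 1 0)
  dvd_zero_two : (d * W : ℤ) ∣ m 0 2 + d * m 1 2

theorem hMat_mul_mul_inv_mem_iff (d W : ℕ) (m : SL3) :
    hMat d * m * (hMat d)⁻¹ ∈ stabLineGroup' (d * W) d ↔ IsConjStab d W m := by
  have h01 : m 0 1 = 0 → ((hMat d * m * (hMat d)⁻¹ : SL3) : M₃) 0 1 =
      d * (m 1 1 - m 0 0 - d * m 1 0) := by
    intro h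
    rw [coe_hMat_mul_mul_inv]
    simp only [h, Matrix.of_apply, Matrix.cons_val', Matrix.cons_val_zero, Matrix.cons_val_one,
      Matrix.cons_val_fin_one]
    ring
  have h02 : ((hMat d * m * (hMat d)⁻¹ : SL3) : M₃) 0 2 = m 0 2 + d * m 1 2 := by
    rw [coe_hMat_mul_mul_inv]
    simp
  simp only [stabLineGroup', Subgroup.mem_mk, Submonoid.mem_mk, Subsemigroup.mem_mk,
    Set.mem_ofPred_eq, coe_hMat_mul_mul_inv_mulVec, h02, Nat.cast_mul]
  constructor
  · rintro ⟨⟨hγ01, hγ02⟩, hv⟩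
    obtain ⟨hm01, hm21, hm11⟩ : m 0 1 = 0 ∧ m 2 1 = 0 ∧ (m 1 1 = 1 ∨ m 1 1 = -1) := by
      simp only [funext_iff, Fin.forall_fin_succ, Matrix.cons_val_zero, Matrix.cons_val_succ,
        Pi.neg_apply, IsEmpty.forall_iff, and_true] at hv
      rcases hv with ⟨h0, h1, h2⟩ | ⟨h0, h1, h2⟩
      · exact ⟨by linear_combination h0 - d * h1, h2, .inl h1⟩
      · exact ⟨by linear_combination h0 - d * h1, h2, .inr h1⟩
    exact ⟨hm01, hm21, hm11, h01 hm01 ▸ hγ01, hγ02⟩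
  · rintro ⟨hm01, hm21, hm11, hγ01, hγ02⟩
    refine ⟨⟨h01 hm01 ▸ hγ01, hγ02⟩, ?_⟩
    rcases hm11 with h | h
    · left; simp [hm01, hm21, h]
    · right; simp [hm01, hm21, h]

theorem isConjStab_of_mem {d W : ℕ} {γ : SL3} (hγ : γ ∈ stabLineGroup' (d * W) d) :
    IsConjStab d W ((hMat d)⁻¹ * γ * hMat d : SL3) :=
  (hMat_mul_mul_inv_mem_iff d W _).mp (by simpa [mul_assoc] using hγ)

def cornerBlock (m : M₃) : Matrix (Fin 2) (Fin 2) ℤ := m.submatrix ![0, 2] ![0, 2]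

theorem cornerBlock_mul {A : M₃} (hA₀ : A 0 1 = 0) (hA₂ : A 2 1 = 0) (B : M₃) :
    cornerBlock (A * B) = cornerBlock A * cornerBlock B := by
  refine Matrix.submatrix_mul_of_apply_eq_zero A B _ _ (by decide) fun i k hk => ?_
  fin_cases i <;> fin_cases k <;> simp_all

theorem det_eq_mul_det_cornerBlock {m : M₃} (h₀ : m 0 1 = 0) (h₂ : m 2 1 = 0) :
    m.det = m 1 1 * (cornerBlock m).det := by
  rw [Matrix.det_fin_three, Matrix.det_fin_two, h₀, h₂]
  simp only [cornerBlock, Matrix.submatrix_apply, Matrix.cons_val_zero, Matrix.cons_val_one,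
    Matrix.cons_val_fin_one]
  ring

theorem IsConjStab.det_cornerBlock {d W : ℕ} {m : SL3} (hm : IsConjStab d W m) :
    (cornerBlock m).det = m 1 1 := by
  have h := det_eq_mul_det_cornerBlock hm.apply_zero_one hm.apply_two_one
  rw [m.2] at h
  rcases hm.apply_one_one with h1 | h1 <;> rw [h1] at h ⊢ <;> linarith

def cornerHom (d W : ℕ) : stabLineGroup' (d * W) d →* Matrix (Fin 2) (Fin 2) ℤ where
  toFun γ := cornerBlock ((hMat d)⁻¹ * γ * hMat d : SL3)
  map_one' := by
    simp only [OneMemClass.coe_one, mul_one, inv_mul_cancel, Matrix.SpecialLinearGroup.coe_one]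
    exact Matrix.submatrix_one _ (by decide)
  map_mul' γ δ := by
    have hγ := isConjStab_of_mem γ.2
    simp only [Subgroup.coe_mul]
    rw [show (hMat d)⁻¹ * (γ * δ) * hMat d =
        ((hMat d)⁻¹ * γ * hMat d) * ((hMat d)⁻¹ * δ * hMat d) by group,
      Matrix.SpecialLinearGroup.coe_mul, cornerBlock_mul hγ.apply_zero_one hγ.apply_two_one]

theorem cornerHom_hMat_mul_mul_inv {d W : ℕ} (m : SL3)
    (hm : hMat d * m * (hMat d)⁻¹ ∈ stabLineGroup' (d * W) d) :
    cornerHom d W ⟨_, hm⟩ = cornerBlock m := by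
  change cornerBlock (((hMat d)⁻¹ * (hMat d * m * (hMat d)⁻¹) * hMat d : SL3) : M₃) = _
  rw [show (hMat d)⁻¹ * (hMat d * m * (hMat d)⁻¹) * hMat d = m by group]

/-- `A` is the transpose of an element of `Γ₁(d, Δ)^*`. -/
def IsGammaOneStarTranspose (d Δ : ℕ) (A : Matrix (Fin 2) (Fin 2) ℤ) : Prop :=
  (A.det = 1 ∨ A.det = -1) ∧ (d : ℤ) ∣ A 0 1 ∧ (Δ : ℤ) ∣ A 0 0 - A.det

theorem IsConjStab.isGammaOneStarTranspose {d W : ℕ} (hd : d ≠ 0) {m : SL3}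
    (hm : IsConjStab d W m) : IsGammaOneStarTranspose d (Nat.gcd d W) (cornerBlock m) := by
  have hW : (W : ℤ) ∣ m 1 1 - m 0 0 - d * m 1 0 :=
    (mul_dvd_mul_iff_left (by exact_mod_cast hd)).mp hm.dvd_zero_one
  have hΔW : ((Nat.gcd d W : ℕ) : ℤ) ∣ W := Int.natCast_dvd_natCast.mpr (Nat.gcd_dvd_right _ _)
  have hΔd : ((Nat.gcd d W : ℕ) : ℤ) ∣ d := Int.natCast_dvd_natCast.mpr (Nat.gcd_dvd_left _ _)
  rw [IsGammaOneStarTranspose, hm.det_cornerBlock]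
  refine ⟨hm.apply_one_one, ?_, ?_⟩
  · exact (dvd_add_left (dvd_mul_right _ _)).mp ((dvd_mul_right _ _).trans hm.dvd_zero_two)
  · have h := dvd_sub (dvd_neg.mpr (hΔW.trans hW)) (hΔd.mul_right (m 1 0))
    rwa [show -(m 1 1 - m 0 0 - d * m 1 0) - d * m 1 0 = cornerBlock m 0 0 - m 1 1 by
      simp [cornerBlock]] at h

theorem exists_isConjStab_cornerBlock_eq {d W : ℕ} {A : Matrix (Fin 2) (Fin 2) ℤ}
    (hA : IsGammaOneStarTranspose d (Nat.gcd d W) A) :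
    ∃ m : SL3, IsConjStab d W m ∧ cornerBlock m = A := by
  obtain ⟨hdet, ⟨b, hb⟩, hΔ⟩ := hA
  obtain ⟨x, hx⟩ : ∃ x, (W : ℤ) ∣ A.det - A 0 0 - d * x := by
    refine Int.exists_dvd_sub_mul_of_gcd_dvd ?_
    rwa [Int.gcd_natCast_natCast, ← dvd_neg, neg_sub]
  set M : M₃ := !![A 0 0, 0, A 0 1; x, A.det, -b; A 1 0, 0, A 1 1]
  have hMA : cornerBlock M = A := by
    ext i j
    fin_cases i <;> fin_cases j <;> rfl
  have hdetM : M.det = 1 := by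
    rw [det_eq_mul_det_cornerBlock rfl rfl, hMA]
    rcases hdet with h | h <;> simp [M, h]
  exact ⟨⟨M, hdetM⟩, ⟨rfl, rfl, hdet, mul_dvd_mul_left _ hx, by simp [M, hb]⟩, hMA⟩

theorem mem_range_toHomUnits_cornerHom_iff {d W : ℕ} (hd : d ≠ 0)
    (A : Matrix.GeneralLinearGroup (Fin 2) ℤ) :
    A ∈ (cornerHom d W).toHomUnits.range ↔ IsGammaOneStarTranspose d (Nat.gcd d W) A := by
  constructor
  · rintro ⟨γ, rfl⟩
    exact (isConjStab_of_mem γ.2).isGammaOneStarTranspose hd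
  · intro hA
    obtain ⟨m, hm, hmA⟩ := exists_isConjStab_cornerBlock_eq hA
    have hγ := (hMat_mul_mul_inv_mem_iff d W m).mpr hm
    exact ⟨⟨_, hγ⟩, Units.ext ((cornerHom_hMat_mul_mul_inv m hγ).trans hmA)⟩

def lowerUnipotent (x y : ℤ) : SL3 :=
  ⟨!![1, 0, 0; x, 1, y; 0, 0, 1], by simp [Matrix.det_fin_three]⟩

theorem lowerUnipotent_mul (x y x' y' : ℤ) :
    lowerUnipotent x y * lowerUnipotent x' y' = lowerUnipotent (x + x') (y + y') := by
  ext i j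
  rw [Matrix.SpecialLinearGroup.coe_mul]
  simp only [lowerUnipotent, Matrix.mul_fin_three]
  fin_cases i <;> fin_cases j <;> simp [add_comm]

theorem lowerUnipotent_zero_zero : lowerUnipotent 0 0 = 1 := by
  ext i j
  fin_cases i <;> fin_cases j <;> simp [lowerUnipotent]

def latticeHom (a b : ℤ) : Multiplicative (ℤ × ℤ) →* SL3 where
  toFun p := lowerUnipotent (a * p.toAdd.1) (b * p.toAdd.2)
  map_one' := by
    simp only [toAdd_one, Prod.fst_zero, Prod.snd_zero, mul_zero, lowerUnipotent_zero_zero]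
  map_mul' p q := by
    simp only [lowerUnipotent_mul, toAdd_mul, Prod.fst_add, Prod.snd_add, mul_add]

theorem coe_latticeHom (a b : ℤ) (p : Multiplicative (ℤ × ℤ)) :
    (latticeHom a b p : M₃) = !![1, 0, 0; a * p.toAdd.1, 1, b * p.toAdd.2; 0, 0, 1] :=
  rfl

theorem latticeHom_injective {a b : ℤ} (ha : a ≠ 0) (hb : b ≠ 0) :
    Function.Injective (latticeHom a b) := by
  refine (injective_iff_map_eq_one _).mpr fun p hp => Multiplicative.toAdd.injective ?_
  have hs : p.toAdd.1 = 0 := by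
    simpa [coe_latticeHom, ha] using congrArg (fun γ : SL3 => (γ : M₃) 1 0) hp
  have ht : p.toAdd.2 = 0 := by
    simpa [coe_latticeHom, hb] using congrArg (fun γ : SL3 => (γ : M₃) 1 2) hp
  exact Prod.ext hs ht

theorem isConjStab_latticeHom (d W : ℕ) (p : Multiplicative (ℤ × ℤ)) :
    IsConjStab d W (latticeHom ((W : ℤ) / Int.gcd d W) W p) := by
  have hW : (W : ℤ) ∣ d * ((W : ℤ) / Int.gcd d W * p.toAdd.1) := by
    rcases eq_or_ne (W : ℤ) 0 with h | h
    · simp [h]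
    · exact (Int.dvd_mul_iff_div_gcd_dvd _ h).mpr (dvd_mul_right _ _)
  refine ⟨rfl, rfl, .inl rfl, ?_, ?_⟩
  · simpa [coe_latticeHom, ← mul_assoc] using mul_dvd_mul_left (d : ℤ) hW
  · simp [coe_latticeHom, ← mul_assoc]

theorem IsConjStab.exists_latticeHom_eq {d W : ℕ} (hd : d ≠ 0) (hW : W ≠ 0) {m : SL3}
    (hm : IsConjStab d W m) (h1 : cornerBlock m = 1) :
    ∃ p, latticeHom ((W : ℤ) / Int.gcd d W) W p = m := by
  have hd' : (d : ℤ) ≠ 0 := by exact_mod_cast hd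
  have hentry : ∀ i j, cornerBlock m i j = (1 : Matrix (Fin 2) (Fin 2) ℤ) i j := by
    intro i j; rw [h1]
  have h00 : m 0 0 = 1 := hentry 0 0
  have h02 : m 0 2 = 0 := hentry 0 1
  have h20 : m 2 0 = 0 := hentry 1 0
  have h22 : m 2 2 = 1 := hentry 1 1
  have h11 : m 1 1 = 1 := by rw [← hm.det_cornerBlock, h1, Matrix.det_one]
  obtain ⟨s, hs⟩ : (W : ℤ) / Int.gcd d W ∣ m 1 0 := by
    rw [← Int.dvd_mul_iff_div_gcd_dvd _ (by exact_mod_cast hW), ← dvd_neg]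
    have h := hm.dvd_zero_one
    rw [h00, h11, mul_dvd_mul_iff_left hd'] at h
    simpa using h
  obtain ⟨t, ht⟩ : (W : ℤ) ∣ m 1 2 := by
    have h := hm.dvd_zero_two
    rwa [h02, zero_add, mul_dvd_mul_iff_left hd'] at h
  refine ⟨Multiplicative.ofAdd (s, t), ?_⟩
  ext i j
  fin_cases i <;> fin_cases j <;>
    simp [coe_latticeHom, h00, h02, h20, h22, h11, hs, ht, hm.apply_zero_one, hm.apply_two_one]

def latticeStabHom (d W : ℕ) : Multiplicative (ℤ × ℤ) →* stabLineGroup' (d * W) d :=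
  ((MulAut.conj (hMat d)).toMonoidHom.comp (latticeHom ((W : ℤ) / Int.gcd d W) W)).codRestrict _
    fun p => (hMat_mul_mul_inv_mem_iff d W _).mpr (isConjStab_latticeHom d W p)

theorem latticeStabHom_injective {d W : ℕ} (hW : W ≠ 0) :
    Function.Injective (latticeStabHom d W) := by
  have hW' : (W : ℤ) ≠ 0 := by exact_mod_cast hW
  have he : (W : ℤ) / Int.gcd d W ≠ 0 := by
    refine left_ne_zero_of_mul (b := (Int.gcd d W : ℤ)) ?_
    rwa [Int.ediv_mul_cancel (Int.gcd_dvd_right _ _)]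
  intro p q h
  exact latticeHom_injective he hW' ((MulAut.conj (hMat d)).injective (congrArg Subtype.val h))

theorem ker_toHomUnits_cornerHom {d W : ℕ} (hd : d ≠ 0) (hW : W ≠ 0) :
    (cornerHom d W).toHomUnits.ker = (latticeStabHom d W).range := by
  ext γ
  rw [MonoidHom.mem_ker, Units.ext_iff, MonoidHom.coe_toHomUnits, Units.val_one,
    MonoidHom.mem_range]
  constructor
  · intro h1
    obtain ⟨p, hp⟩ := (isConjStab_of_mem γ.2).exists_latticeHom_eq hd hW h1
    refine ⟨p, Subtype.ext ?_⟩
    change hMat d * latticeHom _ _ p * (hMat d)⁻¹ = γ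
    rw [hp]
    group
  · rintro ⟨p, rfl⟩
    refine (cornerHom_hMat_mul_mul_inv _ (latticeStabHom d W p).2).trans ?_
    ext i j
    fin_cases i <;> fin_cases j <;> rfl

theorem stmt_6_general (N d : ℕ) (hN : 0 < N) (hdN : d ∣ N) :
    (∀ γ ∈ stabLineGroup' N d,
      (((hMat d)⁻¹ * γ * hMat d : SL3) : Matrix (Fin 3) (Fin 3) ℤ) 0 1 = 0 ∧
      (((hMat d)⁻¹ * γ * hMat d : SL3) : Matrix (Fin 3) (Fin 3) ℤ) 2 1 = 0) ∧
    ∃ π : ↥(stabLineGroup' N d) →* Matrix.GeneralLinearGroup (Fin 2) ℤ,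
      (∀ γ : ↥(stabLineGroup' N d),
        ((π γ : Matrix (Fin 2) (Fin 2) ℤ)) = Matrix.of fun i j : Fin 2 =>
          (((hMat d)⁻¹ * (γ : SL3) * hMat d : SL3) : Matrix (Fin 3) (Fin 3) ℤ)
            (![0, 2] i) (![0, 2] j)) ∧
      (∀ m : Matrix.GeneralLinearGroup (Fin 2) ℤ,
        m ∈ π.range ↔
          (((m : Matrix (Fin 2) (Fin 2) ℤ).det = 1 ∨
            (m : Matrix (Fin 2) (Fin 2) ℤ).det = -1) ∧
           (d : ℤ) ∣ (m : Matrix (Fin 2) (Fin 2) ℤ) 0 1 ∧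
           ((Nat.gcd d (N / d) : ℕ) : ℤ) ∣
             ((m : Matrix (Fin 2) (Fin 2) ℤ) 0 0 - (m : Matrix (Fin 2) (Fin 2) ℤ).det))) ∧
      Nonempty (↥π.ker ≃* Multiplicative (ℤ × ℤ)) := by
  obtain ⟨W, rfl⟩ := hdN
  obtain ⟨hd, hW⟩ := mul_ne_zero_iff.mp hN.ne'
  rw [Nat.mul_div_cancel_left W (Nat.pos_of_ne_zero hd)]
  refine ⟨fun γ hγ => ⟨(isConjStab_of_mem hγ).apply_zero_one, (isConjStab_of_mem hγ).apply_two_one⟩,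
    (cornerHom d W).toHomUnits, fun γ => rfl, mem_range_toHomUnits_cornerHom_iff hd, ?_⟩
  rw [ker_toHomUnits_cornerHom hd hW]
  exact ⟨(MonoidHom.ofInjective (latticeStabHom_injective hW)).symm⟩

/-- **Statement 6.**  Let `d` be a positive divisor of `N` and `Δ = gcd(d, N/d)`.  With
`h_d = [[1,d,0],[0,1,0],[0,0,1]]` and `S′` the subgroup of `Γ₀(N,3)′` of elements fixing
`(d,1,0)ᵀ` up to sign: (i) for `γ ∈ S′` the matrix `m = h_d⁻¹ γ h_d` has vanishing `(1,2)`
and `(3,2)` entries; (ii) the map sending `γ` to `[[m₁₁,m₁₃],[m₃₁,m₃₃]]` is a group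
homomorphism `S′ → GL₂(ℤ)`; (iii) its image is exactly the group of transposes of elements
of `Γ₁(d,Δ)^*`, i.e. the invertible integer matrices `[[a,b],[c,D]]` with `b ≡ 0 (mod d)`
and `a ≡ det (mod Δ)`; and (iv) its kernel is isomorphic to `ℤ × ℤ`. -/
theorem stmt_6 (N d : ℕ) (hN : 0 < N) (hd0 : 0 < d) (hdN : d ∣ N) :
    (∀ γ ∈ stabLineGroup' N d,
      (((hMat d)⁻¹ * γ * hMat d : SL3) : Matrix (Fin 3) (Fin 3) ℤ) 0 1 = 0 ∧
      (((hMat d)⁻¹ * γ * hMat d : SL3) : Matrix (Fin 3) (Fin 3) ℤ) 2 1 = 0) ∧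
    ∃ π : ↥(stabLineGroup' N d) →* Matrix.GeneralLinearGroup (Fin 2) ℤ,
      (∀ γ : ↥(stabLineGroup' N d),
        ((π γ : Matrix (Fin 2) (Fin 2) ℤ)) = Matrix.of fun i j : Fin 2 =>
          (((hMat d)⁻¹ * (γ : SL3) * hMat d : SL3) : Matrix (Fin 3) (Fin 3) ℤ)
            (![0, 2] i) (![0, 2] j)) ∧
      (∀ m : Matrix.GeneralLinearGroup (Fin 2) ℤ,
        m ∈ π.range ↔
          (((m : Matrix (Fin 2) (Fin 2) ℤ).det = 1 ∨
            (m : Matrix (Fin 2) (Fin 2) ℤ).det = -1) ∧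
           (d : ℤ) ∣ (m : Matrix (Fin 2) (Fin 2) ℤ) 0 1 ∧
           ((Nat.gcd d (N / d) : ℕ) : ℤ) ∣
             ((m : Matrix (Fin 2) (Fin 2) ℤ) 0 0 - (m : Matrix (Fin 2) (Fin 2) ℤ).det))) ∧
      Nonempty (↥π.ker ≃* Multiplicative (ℤ × ℤ)) :=
  stmt_6_general N d hN hdN
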